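/- arXiv:1704.01029 — 2 statements merged into one kernel-verified Lean document; each statement's English description precedes it below -/
import Mathlib

section
/- Let p ∈ (1,2] and let D ≥ 0 be a constant such that for every N, n ∈ ℕ and every bilinear form T : ℝᴺ × ℝⁿ → ℝ one has (∑_{j=1}^{n} (∑_{i=1}^{N} |T(e_i,e_j)|^{p})^{2/p})^{1/2} ≤ D · sup{|T(x,y)| : ‖x‖_{ℓ_{p/(p−1)}} ≤ 1, ‖y‖_{ℓ_∞} ≤ 1}. Then for every n ∈ ℕ and every sequence of real scalars (a_j)_{j=1}^{n}, the Khintchine inequality (∑_{j=1}^{n} |a_j|²)^{1/2} ≤ D · (∫₀¹ |∑_{j=1}^{n} a_j r_j(t)|^{p} dt)^{1/p} holds. -/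
open MeasureTheory Real Filter

/-- The `j`-th Rademacher function, `r_j(t) = sgn(sin(2^j π t))`. -/
noncomputable def rademacher (j : ℕ) (t : ℝ) : ℝ :=
  Real.sign (Real.sin ((2 : ℝ) ^ j * Real.pi * t))

/-- `p₀ ∈ (1,2)` is the unique solution of `Γ((p₀+1)/2) = √π / 2`. -/
noncomputable def khintchineP0 : ℝ :=
  sInf {p : ℝ | 1 < p ∧ p < 2 ∧ Real.Gamma ((p + 1) / 2) = Real.sqrt Real.pi / 2}

/-- The optimal constant `A_r` in the Khintchine inequality. -/
noncomputable def khintchineA (r : ℝ) : ℝ :=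
  if r ≤ khintchineP0 then (2 : ℝ) ^ (1 / r - 1 / 2)
  else if r < 2 then
    (1 / Real.sqrt 2) * (Real.Gamma ((r + 1) / 2) / Real.sqrt Real.pi) ^ (-(1 / r))
  else 1

/-- The `ℓ_p` norm of a vector in `ℝⁿ` (for finite `p`). -/
noncomputable def lpNorm (p : ℝ) {n : ℕ} (x : Fin n → ℝ) : ℝ :=
  (∑ i, |x i| ^ p) ^ (1 / p)

/-- The `ℓ_∞` norm of a vector in `ℝⁿ`. -/
noncomputable def linfNorm {n : ℕ} (x : Fin n → ℝ) : ℝ :=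
  ⨆ i, |x i|

/-- The norm `‖T‖_{p,∞} = sup{|T(x,y)| : ‖x‖_{ℓ_p} ≤ 1, ‖y‖_{ℓ_∞} ≤ 1}` of a bilinear form. -/
noncomputable def bilinOpNorm (p : ℝ) {N n : ℕ}
    (T : (Fin N → ℝ) →ₗ[ℝ] (Fin n → ℝ) →ₗ[ℝ] ℝ) : ℝ :=
  sSup {c : ℝ | ∃ (x : Fin N → ℝ) (y : Fin n → ℝ),
    lpNorm p x ≤ 1 ∧ linfNorm y ≤ 1 ∧ c = |T x y|}

/-!
Given `a ∈ ℝⁿ`, apply the hypothesis to the `2ⁿ × n` matrix `M i j = 2^(-n/p) a_j ε_i(j)`, where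
`ε_i(j) = ±1` is the value of `r_{j+1}` on the `i`-th dyadic interval of length `2⁻ⁿ`. Every column
of `M` has `ℓ_p` norm `|a_j|`, so the left side of the hypothesis is `‖a‖₂`. By Hölder,
`‖M‖_{p*,∞} ≤ sup_{‖y‖_∞ ≤ 1} ‖M y‖_p`, and `‖M y‖_p^p` is the `p`-th moment of the Rademacher sum
`∑ y_j a_j r_{j+1}`. This moment is convex in each `y_j` and even in each `y_j` (flipping the bit
of `r_{j+1}` permutes the dyadic intervals), so it is largest at `y = 1`, where it is
`∫₀¹ |∑ a_j r_{j+1}|^p`.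
-/

open Function Matrix

-- The value of `r_{j+1}` on `(i/2ⁿ, (i+1)/2ⁿ)`: the `(j+1)`-st binary digit of `t` there is bit
-- `n - 1 - j` of `i`.
noncomputable def dyadicSign (n i : ℕ) (j : Fin n) : ℝ :=
  if i.testBit (n - 1 - j) then -1 else 1

lemma abs_dyadicSign (n i : ℕ) (j : Fin n) : |dyadicSign n i j| = 1 := by
  unfold dyadicSign; split_ifs <;> simp

lemma dyadicSign_xor_two_pow (n i : ℕ) (k : Fin n) :
    dyadicSign n (i ^^^ 2 ^ (n - 1 - k)) = update (dyadicSign n i) k (-dyadicSign n i k) := by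
  funext j
  rcases eq_or_ne j k with rfl | hjk
  · simp only [dyadicSign, Nat.testBit_xor, Nat.testBit_two_pow_self, update_self]
    cases i.testBit (n - 1 - j) <;> simp
  · have hbit : n - 1 - k ≠ n - 1 - j := by have := Fin.val_ne_of_ne hjk; omega
    simp [dyadicSign, Nat.testBit_xor, Nat.testBit_two_pow_of_ne hbit, update_of_ne hjk]

lemma neg_one_pow_div_two_pow (i e : ℕ) :
    (-1 : ℝ) ^ (i / 2 ^ e) = if i.testBit e then -1 else 1 := by
  rw [Nat.testBit_eq_decide_div_mod_eq]
  rcases Nat.even_or_odd (i / 2 ^ e) with h | h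
  · simp [h.neg_one_pow, Nat.even_iff.mp h]
  · simp [h.neg_one_pow, Nat.odd_iff.mp h]

lemma Real.sign_sin_pi_mul_of_mem_Ioo {k : ℕ} {x : ℝ} (hx : x ∈ Set.Ioo (k : ℝ) (k + 1)) :
    Real.sign (sin (π * x)) = (-1) ^ k := by
  have hpos : 0 < sin (π * (x - k)) :=
    sin_pos_of_pos_of_lt_pi (by nlinarith [pi_pos, hx.1]) (by nlinarith [pi_pos, hx.2])
  have hshift : sin (π * x) = (-1) ^ k * sin (π * (x - k)) := by
    rw [← sin_add_nat_mul_pi]; ring_nf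
  rw [hshift]
  rcases neg_one_pow_eq_or ℝ k with h | h <;> simp [h, Real.sign_of_pos, Real.sign_of_neg, hpos]

lemma two_pow_mul_mem_Ioo {n m i : ℕ} {t : ℝ} (hm : m ≤ n)
    (ht : t ∈ Set.Ioo ((i : ℝ) / 2 ^ n) ((i + 1) / 2 ^ n)) :
    2 ^ m * t ∈ Set.Ioo ((i / 2 ^ (n - m) : ℕ) : ℝ) ((i / 2 ^ (n - m) : ℕ) + 1) := by
  set e := n - m
  have hscale : ∀ x : ℝ, 2 ^ m * (x / 2 ^ n) = x / 2 ^ e := fun x => by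
    rw [show n = m + e by omega, pow_add]; field_simp
  have hsucc : i + 1 ≤ (i / 2 ^ e + 1) * 2 ^ e := by
    have := Nat.lt_div_mul_add (a := i) (Nat.two_pow_pos e); rw [add_one_mul]; omega
  constructor
  · calc ((i / 2 ^ e : ℕ) : ℝ) ≤ i / 2 ^ e := by exact_mod_cast Nat.cast_div_le (α := ℝ)
      _ = 2 ^ m * (i / 2 ^ n) := (hscale _).symm
      _ < 2 ^ m * t := by gcongr; exact ht.1
  · calc 2 ^ m * t < 2 ^ m * ((i + 1) / 2 ^ n) := by gcongr; exact ht.2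
      _ = (i + 1) / 2 ^ e := hscale _
      _ ≤ (i / 2 ^ e : ℕ) + 1 := by
        rw [div_le_iff₀ (by positivity)]; exact_mod_cast hsucc

lemma rademacher_succ_eq_dyadicSign {n i : ℕ} (j : Fin n) {t : ℝ}
    (ht : t ∈ Set.Ioo ((i : ℝ) / 2 ^ n) ((i + 1) / 2 ^ n)) :
    rademacher (j + 1) t = dyadicSign n i j := by
  have hx := two_pow_mul_mem_Ioo (m := j + 1) j.2 ht
  rw [rademacher, show (2 : ℝ) ^ (j.1 + 1) * π * t = π * (2 ^ (j.1 + 1) * t) by ring,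
    Real.sign_sin_pi_mul_of_mem_Ioo hx, neg_one_pow_div_two_pow, dyadicSign,
    show n - (j.1 + 1) = n - 1 - j by omega]

theorem intervalIntegral_eq_sum_of_eqOn_Ioo {E : Type*} [NormedAddCommGroup E] [NormedSpace ℝ E]
    [CompleteSpace E] {f : ℝ → E} {g : ℕ → E} {c : ℕ → ℝ} {m : ℕ} (hc : Monotone c)
    (hf : ∀ i < m, Set.EqOn f (fun _ => g i) (Set.Ioo (c i) (c (i + 1)))) :
    ∫ t in c 0..c m, f t = ∑ i ∈ Finset.range m, (c (i + 1) - c i) • g i := by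
  rw [← intervalIntegral.sum_integral_adjacent_intervals fun i hi => ?_]
  · refine Finset.sum_congr rfl fun i hi => ?_
    rw [intervalIntegral.integral_congr_Ioo_of_le (hc i.le_succ) (hf i (Finset.mem_range.1 hi)),
      intervalIntegral.integral_const]
  · exact intervalIntegrable_const.congr_uIoo
      (by rw [Set.uIoo_of_le (hc i.le_succ)]; exact (hf i hi).symm)

/-- `E |∑ⱼ bⱼ r_{j+1}|^p`, computed on the `2ⁿ` dyadic intervals on which `r₁, …, rₙ` are
constant. -/
noncomputable def rademacherMoment (p : ℝ) {n : ℕ} (b : Fin n → ℝ) : ℝ :=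
  ∑ i : Fin (2 ^ n), ((2 : ℝ) ^ n)⁻¹ * |b ⬝ᵥ dyadicSign n i| ^ p

lemma rademacherMoment_nonneg (p : ℝ) {n : ℕ} (b : Fin n → ℝ) : 0 ≤ rademacherMoment p b :=
  Finset.sum_nonneg fun _ _ => by positivity

lemma setIntegral_rademacher_sum_eq_rademacherMoment (p : ℝ) {n : ℕ} (a : Fin n → ℝ) :
    ∫ t in Set.Icc (0 : ℝ) 1, |∑ j : Fin n, a j * rademacher (j.1 + 1) t| ^ p
      = rademacherMoment p a := by
  set c : ℕ → ℝ := fun i => i / 2 ^ n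
  have hc : Monotone c := fun i j hij => by simp only [c]; gcongr
  have hstep : ∀ i < 2 ^ n,
      Set.EqOn (fun t => |∑ j : Fin n, a j * rademacher (j.1 + 1) t| ^ p)
        (fun _ => |a ⬝ᵥ dyadicSign n i| ^ p) (Set.Ioo (c i) (c (i + 1))) := by
    intro i _ t ht
    simp only [c, Nat.cast_succ] at ht
    simp only [dotProduct, rademacher_succ_eq_dyadicSign _ ht]
  have h0 : c 0 = 0 := by simp [c]
  have h1 : c (2 ^ n) = 1 := by simp [c]
  rw [integral_Icc_eq_integral_Ioc, ← intervalIntegral.integral_of_le zero_le_one, ← h0, ← h1,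
    intervalIntegral_eq_sum_of_eqOn_Ioo hc hstep, rademacherMoment,
    ← Fin.sum_univ_eq_sum_range (fun i => (c (i + 1) - c i) • |a ⬝ᵥ dyadicSign n i| ^ p)]
  refine Fintype.sum_congr _ _ fun i => ?_
  simp only [c, smul_eq_mul, Nat.cast_succ]
  ring

lemma update_neg_dotProduct_update_neg {ι R : Type*} [Fintype ι] [DecidableEq ι] [CommRing R]
    (u v : ι → R) (k : ι) : update u k (-u k) ⬝ᵥ update v k (-v k) = u ⬝ᵥ v := by
  refine Fintype.sum_congr _ _ fun j => ?_
  rcases eq_or_ne j k with rfl | h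
  · simp
  · simp [update_of_ne h]

lemma rademacherMoment_update_neg (p : ℝ) {n : ℕ} (b : Fin n → ℝ) (k : Fin n) :
    rademacherMoment p (update b k (-b k)) = rademacherMoment p b := by
  let flip : Equiv.Perm (Fin (2 ^ n)) := Involutive.toPerm
    (fun i => ⟨i ^^^ 2 ^ (n - 1 - k),
      Nat.xor_lt_two_pow i.2 (Nat.pow_lt_pow_right one_lt_two (by omega))⟩)
    (fun i => Fin.ext (Nat.xor_xor_cancel_right _ _))
  rw [rademacherMoment, ← Equiv.sum_comp flip]
  refine Fintype.sum_congr _ _ fun i => ?_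
  have hflip : ((flip i : Fin (2 ^ n)) : ℕ) = i ^^^ 2 ^ (n - 1 - k) := rfl
  rw [hflip, dyadicSign_xor_two_pow, update_neg_dotProduct_update_neg]

lemma convexOn_abs_rpow {p : ℝ} (hp : 1 ≤ p) : ConvexOn ℝ Set.univ fun x : ℝ => |x| ^ p := by
  refine ⟨convex_univ, fun x _ y _ a b ha hb hab => ?_⟩
  calc |a • x + b • y| ^ p ≤ (a • |x| + b • |y|) ^ p := by
        gcongr
        calc |a • x + b • y| ≤ |a • x| + |b • y| := abs_add_le _ _
          _ = a • |x| + b • |y| := by simp [abs_mul, abs_of_nonneg ha, abs_of_nonneg hb]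
    _ ≤ a • |x| ^ p + b • |y| ^ p :=
        (convexOn_rpow hp).2 (abs_nonneg x) (abs_nonneg y) ha hb hab

lemma rademacherMoment_update_mul_le {p : ℝ} (hp : 1 ≤ p) {n : ℕ} (b : Fin n → ℝ) (k : Fin n)
    {t : ℝ} (ht : |t| ≤ 1) : rademacherMoment p (update b k (t * b k)) ≤ rademacherMoment p b := by
  obtain ⟨ht₁, ht₂⟩ := abs_le.1 ht
  have hα : 0 ≤ (1 + t) / 2 := by linarith
  have hβ : 0 ≤ (1 - t) / 2 := by linarith
  have hcomb :
      update b k (t * b k) = ((1 + t) / 2) • b + ((1 - t) / 2) • update b k (-b k) := by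
    funext j
    rcases eq_or_ne j k with rfl | h
    · simp; ring
    · simp [update_of_ne h]; ring
  calc rademacherMoment p (update b k (t * b k))
      ≤ (1 + t) / 2 * rademacherMoment p b
        + (1 - t) / 2 * rademacherMoment p (update b k (-b k)) := by
        simp only [rademacherMoment, hcomb, Finset.mul_sum, ← Finset.sum_add_distrib,
          add_dotProduct, smul_dotProduct]
        refine Finset.sum_le_sum fun i _ => ?_
        have := (convexOn_abs_rpow hp).2 trivial trivial hα hβ (by ring)
          (x := b ⬝ᵥ dyadicSign n i) (y := update b k (-b k) ⬝ᵥ dyadicSign n i)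
        simp only [smul_eq_mul] at this ⊢
        exact (mul_le_mul_of_nonneg_left this (by positivity)).trans_eq (by ring)
    _ = rademacherMoment p b := by rw [rademacherMoment_update_neg]; ring

lemma rademacherMoment_mul_le {p : ℝ} (hp : 1 ≤ p) {n : ℕ} (a y : Fin n → ℝ)
    (hy : ∀ j, |y j| ≤ 1) : rademacherMoment p (y * a) ≤ rademacherMoment p a := by
  suffices h : ∀ s : Finset (Fin n), ∀ y : Fin n → ℝ, (∀ j, |y j| ≤ 1) → (∀ j ∉ s, y j = 1) →
      rademacherMoment p (y * a) ≤ rademacherMoment p a from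
    h Finset.univ y hy fun j hj => absurd (Finset.mem_univ j) hj
  intro s
  induction s using Finset.induction_on with
  | empty =>
    intro y _ hy₁
    rw [show y = 1 from funext fun j => hy₁ j (Finset.notMem_empty j), one_mul]
  | insert k s _ ih =>
    intro y hy hy₁
    set y' := update y k 1
    have hy' : y * a = update (y' * a) k (y k * (y' * a) k) := by
      funext j
      rcases eq_or_ne j k with rfl | h
      · simp [y']
      · simp [y', update_of_ne h]
    calc rademacherMoment p (y * a) ≤ rademacherMoment p (y' * a) := by
          rw [hy']; exact rademacherMoment_update_mul_le hp _ k (hy k)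
      _ ≤ rademacherMoment p a := by
          refine ih y' (fun j => ?_) (fun j hj => ?_)
          · rcases eq_or_ne j k with rfl | h
            · simp [y']
            · simp [y', update_of_ne h, hy j]
          · rcases eq_or_ne j k with rfl | h
            · simp [y']
            · simp only [y', update_of_ne h]; exact hy₁ j (by simp [h, hj])

lemma abs_le_linfNorm {n : ℕ} (y : Fin n → ℝ) (j : Fin n) : |y j| ≤ linfNorm y := by
  unfold linfNorm; exact le_ciSup (Set.finite_range fun i => |y i|).bddAbove j

lemma abs_dotProduct_le_lpNorm_mul_lpNorm {p q : ℝ} (hpq : p.HolderConjugate q) {n : ℕ}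
    (x v : Fin n → ℝ) : |x ⬝ᵥ v| ≤ _root_.lpNorm p x * _root_.lpNorm q v := by
  have hneg := Real.inner_le_Lp_mul_Lq Finset.univ (-x) v hpq
  simp only [Pi.neg_apply, abs_neg, neg_mul, Finset.sum_neg_distrib] at hneg
  exact abs_le.2 ⟨by rw [dotProduct]; unfold _root_.lpNorm; linarith,
    Real.inner_le_Lp_mul_Lq Finset.univ x v hpq⟩

lemma bilinOpNorm_toLinearMap₂'_le {p q C : ℝ} (hpq : p.HolderConjugate q) (hC : 0 ≤ C)
    {N n : ℕ} (M : Matrix (Fin N) (Fin n) ℝ)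
    (hM : ∀ y, linfNorm y ≤ 1 → _root_.lpNorm q (M *ᵥ y) ≤ C) :
    bilinOpNorm p (toLinearMap₂' ℝ M) ≤ C := by
  refine Real.sSup_le ?_ hC
  rintro _ ⟨x, y, hx, hy, rfl⟩
  rw [toLinearMap₂'_apply']
  calc |x ⬝ᵥ M *ᵥ y| ≤ _root_.lpNorm p x * _root_.lpNorm q (M *ᵥ y) :=
        abs_dotProduct_le_lpNorm_mul_lpNorm hpq _ _
    _ ≤ 1 * C := mul_le_mul hx (hM y hy) (by unfold _root_.lpNorm; positivity) zero_le_one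
    _ = C := one_mul C

noncomputable def rademacherMatrix (p : ℝ) {n : ℕ} (a : Fin n → ℝ) :
    Matrix (Fin (2 ^ n)) (Fin n) ℝ :=
  fun i j => ((2 : ℝ) ^ n)⁻¹ ^ (1 / p) * (a j * dyadicSign n i j)

lemma abs_rpow_one_div_mul_rpow {p c : ℝ} (hp : 0 < p) (hc : 0 ≤ c) (x : ℝ) :
    |c ^ (1 / p) * x| ^ p = c * |x| ^ p := by
  rw [abs_mul, abs_of_nonneg (by positivity), mul_rpow (by positivity) (abs_nonneg _),
    ← rpow_mul hc, one_div_mul_cancel hp.ne', rpow_one]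

lemma sum_abs_rademacherMatrix_rpow {p : ℝ} (hp : 0 < p) {n : ℕ} (a : Fin n → ℝ) (j : Fin n) :
    ∑ i, |rademacherMatrix p a i j| ^ p = |a j| ^ p := by
  simp only [rademacherMatrix, abs_rpow_one_div_mul_rpow hp (c := ((2 : ℝ) ^ n)⁻¹) (by positivity)]
  simp only [abs_mul, abs_dyadicSign, mul_one, Finset.sum_const, Finset.card_univ,
    Fintype.card_fin, nsmul_eq_mul]
  push_cast; field_simp

lemma sum_sum_abs_rademacherMatrix_rpow {p : ℝ} (hp : 0 < p) {n : ℕ} (a : Fin n → ℝ) :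
    ∑ j, (∑ i, |rademacherMatrix p a i j| ^ p) ^ ((2 : ℝ) / p) = ∑ j, |a j| ^ (2 : ℝ) := by
  refine Fintype.sum_congr _ _ fun j => ?_
  rw [sum_abs_rademacherMatrix_rpow hp, ← rpow_mul (abs_nonneg _), mul_div_cancel₀ _ hp.ne']

lemma sum_abs_rademacherMatrix_mulVec_rpow {p : ℝ} (hp : 0 < p) {n : ℕ} (a y : Fin n → ℝ) :
    ∑ i, |(rademacherMatrix p a *ᵥ y) i| ^ p = rademacherMoment p (y * a) := by
  refine Fintype.sum_congr _ _ fun i => ?_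
  rw [← abs_rpow_one_div_mul_rpow hp (c := ((2 : ℝ) ^ n)⁻¹) (by positivity)]
  simp only [rademacherMatrix, mulVec, dotProduct, Finset.mul_sum, Pi.mul_apply]
  congr 2
  exact Finset.sum_congr rfl fun _ _ => by ring

lemma bilinOpNorm_rademacherMatrix_le {p : ℝ} (hp : 1 < p) {n : ℕ} (a : Fin n → ℝ) :
    bilinOpNorm (p / (p - 1)) (toLinearMap₂' ℝ (rademacherMatrix p a))
      ≤ rademacherMoment p a ^ (1 / p) := by
  have hp₀ : 0 < p := by linarith
  refine bilinOpNorm_toLinearMap₂'_le (Real.HolderConjugate.conjExponent hp).symm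
    (rpow_nonneg (rademacherMoment_nonneg p a) _) _ fun y hy => ?_
  rw [_root_.lpNorm, sum_abs_rademacherMatrix_mulVec_rpow hp₀ a y]
  gcongr
  · exact rademacherMoment_nonneg p _
  · exact rademacherMoment_mul_le hp.le a y fun j => (abs_le_linfNorm y j).trans hy

theorem bilinear_mixed_littlewood_implies_khintchine_general (p : ℝ) (hp1 : 1 < p)
    (D : ℝ) (hD : 0 ≤ D)
    (h : ∀ (N n : ℕ) (T : (Fin N → ℝ) →ₗ[ℝ] (Fin n → ℝ) →ₗ[ℝ] ℝ),
      (∑ j : Fin n, (∑ i : Fin N, |T (Pi.single i 1) (Pi.single j 1)| ^ p) ^ ((2 : ℝ) / p))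
          ^ ((1 : ℝ) / 2)
        ≤ D * bilinOpNorm (p / (p - 1)) T) :
    ∀ (n : ℕ) (a : Fin n → ℝ),
      (∑ j : Fin n, |a j| ^ (2 : ℝ)) ^ ((1 : ℝ) / 2)
        ≤ D * (∫ t in Set.Icc (0 : ℝ) 1,
            |∑ j : Fin n, a j * rademacher (j.1 + 1) t| ^ p) ^ (1 / p) := by
  intro n a
  set M := rademacherMatrix p a
  have hentry : ∀ i j, toLinearMap₂' ℝ M (Pi.single i (1 : ℝ)) (Pi.single j (1 : ℝ)) = M i j :=
    fun i j => by simp [toLinearMap₂'_apply']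
  calc (∑ j, |a j| ^ (2 : ℝ)) ^ ((1 : ℝ) / 2)
      = (∑ j, (∑ i, |M i j| ^ p) ^ ((2 : ℝ) / p)) ^ ((1 : ℝ) / 2) := by
        rw [sum_sum_abs_rademacherMatrix_rpow (by linarith) a]
    _ ≤ D * bilinOpNorm (p / (p - 1)) (toLinearMap₂' ℝ M) := by
        simpa only [hentry] using h _ _ (toLinearMap₂' ℝ M)
    _ ≤ D * rademacherMoment p a ^ (1 / p) := by
        gcongr; exact bilinOpNorm_rademacherMatrix_le hp1 a
    _ = _ := by rw [setIntegral_rademacher_sum_eq_rademacherMoment]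

/-- Theorem `pppp` implies the Khintchine inequality (case `1 < p ≤ 2`), with the
same constant. -/
theorem bilinear_mixed_littlewood_implies_khintchine (p : ℝ) (hp1 : 1 < p) (hp2 : p ≤ 2)
    (D : ℝ) (hD : 0 ≤ D)
    (h : ∀ (N n : ℕ) (T : (Fin N → ℝ) →ₗ[ℝ] (Fin n → ℝ) →ₗ[ℝ] ℝ),
      (∑ j : Fin n, (∑ i : Fin N, |T (Pi.single i 1) (Pi.single j 1)| ^ p) ^ ((2 : ℝ) / p))
          ^ ((1 : ℝ) / 2)
        ≤ D * bilinOpNorm (p / (p - 1)) T) :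
    ∀ (n : ℕ) (a : Fin n → ℝ),
      (∑ j : Fin n, |a j| ^ (2 : ℝ)) ^ ((1 : ℝ) / 2)
        ≤ D * (∫ t in Set.Icc (0 : ℝ) 1,
            |∑ j : Fin n, a j * rademacher (j.1 + 1) t| ^ p) ^ (1 / p) :=
  bilinear_mixed_littlewood_implies_khintchine_general p hp1 D hD h
end

section
/- Let 0 < r < 2 and m ∈ ℕ, m ≥ 1, and let K ≥ 0 be a constant such that for every N ∈ ℕ and every array of real scalars (y_{i₁…i_m})_{i₁,…,i_m=1}^{N} one has (∑_{i₁,…,i_m=1}^{N} |y_{i₁…i_m}|²)^{1/2} ≤ K · (∫_{[0,1]^m} |∑_{i₁,…,i_m=1}^{N} r_{i₁}(t₁)···r_{i_m}(t_m) y_{i₁…i_m}|^{r} dt₁···dt_m)^{1/r}. Then K ≥ 2^{m(2−r)/(2r)}. (This is witnessed by the array with y_{i₁…i_m} = 1 when all i₁, …, i_m ∈ {1,2} and y_{i₁…i_m} = 0 otherwise, for which the left side equals 2^{m/2} and the integral factor equals 2^{m(r−1)/r}.) -/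
open MeasureTheory Real Filter

/-!
Test the inequality on the array `y ≡ 1` on `{1,2}^m`, whose `ℓ²` norm is `2^{m/2}`. Its Rademacher
chaos factors as `∏ₖ (r₁(tₖ) + r₂(tₖ))`, and `|r₁ + r₂|` is `2` on half of `[0,1]` and `0` on the
other half, so by Fubini the `L^r` integral is `(2^{r-1})^m`. Comparing `2^{m/2}` with
`K · 2^{m(r-1)/r}` gives the bound.
-/

lemma Real.sign_sin_of_pos_of_lt_pi {x : ℝ} (h0 : 0 < x) (hπ : x < π) : sign (sin x) = 1 :=
  sign_of_pos (sin_pos_of_pos_of_lt_pi h0 hπ)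

lemma Real.sign_sin_of_pi_lt_of_lt_two_pi {x : ℝ} (hπ : π < x) (h2π : x < 2 * π) :
    sign (sin x) = -1 := by
  refine sign_of_neg ?_
  rw [← sin_sub_two_pi]
  exact sin_neg_of_neg_of_neg_pi_lt (by linarith) (by linarith)

lemma abs_rademacher_one_add_two {t : ℝ} (ht0 : 0 < t) (ht1 : t < 1)
    (h14 : t ≠ 1 / 4) (h12 : t ≠ 1 / 2) (h34 : t ≠ 3 / 4) :
    |rademacher 1 t + rademacher 2 t| = (Set.Ioo 0 (1 / 4) ∪ Set.Ioo (3 / 4) 1).indicator 2 t := by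
  have hπ := pi_pos
  have h4π : sin (2 ^ 2 * π * t) = sin (2 ^ 2 * π * t - 2 * π) := (sin_sub_two_pi _).symm
  simp only [rademacher, pow_one]
  rcases h14.lt_or_gt with h14 | h14
  · rw [sign_sin_of_pos_of_lt_pi (by nlinarith) (by nlinarith),
      sign_sin_of_pos_of_lt_pi (by nlinarith) (by nlinarith),
      Set.indicator_of_mem (Set.mem_union_left _ (Set.mem_Ioo.mpr ⟨ht0, h14⟩))]
    norm_num
  rcases h12.lt_or_gt with h12 | h12
  · rw [sign_sin_of_pos_of_lt_pi (by nlinarith) (by nlinarith),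
      sign_sin_of_pi_lt_of_lt_two_pi (by nlinarith) (by nlinarith), Set.indicator_of_notMem]
    · norm_num
    · rintro (⟨-, h⟩ | ⟨h, -⟩) <;> linarith
  rw [sign_sin_of_pi_lt_of_lt_two_pi (by nlinarith) (by nlinarith), h4π]
  rcases h34.lt_or_gt with h34 | h34
  · rw [sign_sin_of_pos_of_lt_pi (by nlinarith) (by nlinarith), Set.indicator_of_notMem]
    · norm_num
    · rintro (⟨-, h⟩ | ⟨h, -⟩) <;> linarith
  · rw [sign_sin_of_pi_lt_of_lt_two_pi (by nlinarith) (by nlinarith),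
      Set.indicator_of_mem (Set.mem_union_right _ (Set.mem_Ioo.mpr ⟨h34, ht1⟩))]
    norm_num

lemma integral_abs_rademacher_one_add_two_rpow {r : ℝ} (hr : 0 < r) :
    ∫ t in Set.Icc (0 : ℝ) 1, |rademacher 1 t + rademacher 2 t| ^ r = 2 ^ (r - 1) := by
  set S : Set ℝ := Set.Ioo 0 (1 / 4) ∪ Set.Ioo (3 / 4) 1
  have hS : MeasurableSet S := measurableSet_Ioo.union measurableSet_Ioo
  have hquarters : ∀ᵐ t : ℝ, t ∉ ({1 / 4, 1 / 2, 3 / 4} : Set ℝ) :=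
    measure_eq_zero_iff_ae_notMem.mp ((Set.toFinite _).measure_zero _)
  have hae : ∀ᵐ t : ℝ, t ∈ Set.Ioo (0 : ℝ) 1 →
      |rademacher 1 t + rademacher 2 t| ^ r = S.indicator (fun _ ↦ 2 ^ r) t := by
    filter_upwards [hquarters] with t ht ⟨ht0, ht1⟩
    simp only [Set.mem_insert_iff, Set.mem_singleton_iff, not_or] at ht
    rw [abs_rademacher_one_add_two ht0 ht1 ht.1 ht.2.1 ht.2.2]
    by_cases htS : t ∈ S
    · rw [Set.indicator_of_mem htS, Set.indicator_of_mem htS, Pi.ofNat_apply]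
    · rw [Set.indicator_of_notMem htS, Set.indicator_of_notMem htS, zero_rpow hr.ne']
  have hSsub : Set.Ioo (0 : ℝ) 1 ∩ S = S :=
    Set.inter_eq_right.mpr (Set.union_subset (Set.Ioo_subset_Ioo le_rfl (by norm_num))
      (Set.Ioo_subset_Ioo (by norm_num) le_rfl))
  have hdisj : Disjoint (Set.Ioo (0 : ℝ) (1 / 4)) (Set.Ioo (3 / 4) 1) :=
    Set.disjoint_left.mpr fun x hx hx' ↦ by linarith [hx.2, hx'.1]
  rw [integral_Icc_eq_integral_Ioc, integral_Ioc_eq_integral_Ioo,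
    setIntegral_congr_ae measurableSet_Ioo hae, setIntegral_indicator hS, hSsub,
    setIntegral_const, measureReal_def, measure_union hdisj measurableSet_Ioo,
    Real.volume_Ioo, Real.volume_Ioo, ← ENNReal.ofReal_add (by norm_num) (by norm_num),
    rpow_sub two_pos, rpow_one]
  norm_num
  ring

lemma setIntegral_Icc_pi_prod {ι 𝕜 : Type*} [Fintype ι] [RCLike 𝕜] (a b : ι → ℝ)
    (f : ι → ℝ → 𝕜) :
    ∫ t in Set.Icc a b, ∏ k, f k (t k) = ∏ k, ∫ x in Set.Icc (a k) (b k), f k x := by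
  rw [← Set.pi_univ_Icc, volume_pi, Measure.restrict_pi_pi, integral_fintype_prod_eq_prod]

theorem multiple_khintchine_lower_bound_general (r : ℝ) (hr0 : 0 < r)
    (m : ℕ) (K : ℝ)
    (h : ∀ (N : ℕ) (y : (Fin m → Fin N) → ℝ),
      (∑ i : Fin m → Fin N, |y i| ^ (2 : ℝ)) ^ ((1 : ℝ) / 2)
        ≤ K * (∫ t : Fin m → ℝ in Set.Icc 0 1,
            |∑ i : Fin m → Fin N,
              (∏ k, rademacher ((i k).1 + 1) (t k)) * y i| ^ r) ^ (1 / r)) :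
    (2 : ℝ) ^ ((m : ℝ) * (2 - r) / (2 * r)) ≤ K := by
  have key := h 2 fun _ ↦ 1
  have hchaos (t : Fin m → ℝ) :
      |∑ i : Fin m → Fin 2, (∏ k, rademacher ((i k).1 + 1) (t k)) * 1| ^ r
        = ∏ k, |rademacher 1 (t k) + rademacher 2 (t k)| ^ r := by
    simp only [mul_one]
    rw [← Fintype.prod_sum fun k (j : Fin 2) ↦ rademacher (j.1 + 1) (t k), Finset.abs_prod]
    simp only [Fin.sum_univ_two]
    exact (finsetProd_rpow _ _ (fun k _ ↦ abs_nonneg _) r).symm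
  simp only [hchaos] at key
  rw [setIntegral_Icc_pi_prod (f := fun _ x ↦ |rademacher 1 x + rademacher 2 x| ^ r)] at key
  simp only [Pi.zero_apply, Pi.one_apply,
    integral_abs_rademacher_one_add_two_rpow hr0, Finset.prod_const, abs_one, one_rpow,
    Finset.sum_const, Finset.card_univ, Fintype.card_fun, Fintype.card_fin, nsmul_eq_mul,
    mul_one] at key
  rw [Nat.cast_pow, Nat.cast_ofNat, ← rpow_natCast, ← rpow_natCast (2 ^ (r - 1)),
    ← rpow_mul two_pos.le, ← rpow_mul two_pos.le, ← rpow_mul two_pos.le,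
    ← div_le_iff₀ (rpow_pos_of_pos two_pos _), ← rpow_sub two_pos] at key
  have hexponent : (m : ℝ) * (2 - r) / (2 * r) = m * (1 / 2) - (r - 1) * m * (1 / r) := by
    field_simp
    ring
  rwa [hexponent]

/-- Any constant in the multiple Khintchine inequality (`0 < r < 2`) is at least
`2^{m(2-r)/(2r)}`. -/
theorem multiple_khintchine_lower_bound (r : ℝ) (hr0 : 0 < r) (hr2 : r < 2)
    (m : ℕ) (hm : 1 ≤ m) (K : ℝ) (hK : 0 ≤ K)
    (h : ∀ (N : ℕ) (y : (Fin m → Fin N) → ℝ),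
      (∑ i : Fin m → Fin N, |y i| ^ (2 : ℝ)) ^ ((1 : ℝ) / 2)
        ≤ K * (∫ t : Fin m → ℝ in Set.Icc 0 1,
            |∑ i : Fin m → Fin N,
              (∏ k, rademacher ((i k).1 + 1) (t k)) * y i| ^ r) ^ (1 / r)) :
    (2 : ℝ) ^ ((m : ℝ) * (2 - r) / (2 * r)) ≤ K :=
  multiple_khintchine_lower_bound_general r hr0 m K h
end
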